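/- For every ε > 0 there exist a disk habitat H with area A and perimeter L and a rotationally symmetric probability density f_d with mean dispersal distance μ such that pA/(μL) > 1/π − ε, where p is the probability that a seed from a uniformly random plant in H, displaced by an independent draw from f_d, lands outside H. Hence the constant 1/π in the symmetric bound p ≤ μL/(πA) is optimal. -/

import Mathlib

/-!
If a seed from `y ∈ H` is displaced by `z`, it lands outside `H` exactly when `y` lies in
`{y ∈ H | z + y ∉ H}`, so by Tonelli `pA = ∫ f_d(z) |{y ∈ H | z + y ∉ H}| dz`. For a disk `H` of
radius `R_H` and `|z| = t ≤ R_H` this region contains a strip of width `t` along the half of the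
boundary facing `z`, of area at least `2(R_H - t)t`. When `f_d` is supported in the disk of radius
`R_d` this gives `pA ≥ 2(R_H - R_d)μ`, hence `pA/(μL) ≥ (R_H - R_d)/(πR_H)`, which tends to
`1/π` as `R_H → ∞`.
-/

open MeasureTheory Real Set

open scoped ENNReal

theorem setLIntegral_setLIntegral_compl_sub {G : Type*} [MeasurableSpace G] [AddGroup G]
    [MeasurableAdd₂ G] [MeasurableNeg G] {μ : Measure G} [SFinite μ] [μ.IsAddRightInvariant]
    {H : Set G} (hH : MeasurableSet H) {f : G → ℝ≥0∞} (hf : Measurable f) :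
    ∫⁻ y in H, ∫⁻ x in Hᶜ, f (x - y) ∂μ ∂μ = ∫⁻ z, f z * μ {y ∈ H | z + y ∉ H} ∂μ := by
  have inner (y : G) :
      ∫⁻ x in Hᶜ, f (x - y) ∂μ = ∫⁻ z, f z * ((z + ·) ⁻¹' Hᶜ).indicator 1 y ∂μ := by
    rw [← lintegral_indicator hH.compl, ← lintegral_add_right_eq_self _ y]
    congr 1 with z
    by_cases hz : z + y ∈ H <;> simp [hz]
  simp_rw [inner]
  rw [lintegral_lintegral_swap]
  · congr 1 with z
    have hs : MeasurableSet ((z + ·) ⁻¹' Hᶜ) := hH.compl.preimage (measurable_const_add z)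
    rw [lintegral_const_mul _ (measurable_one.indicator hs), lintegral_indicator_one hs,
      Measure.restrict_apply hs]
    congr 2
    ext y
    simp [and_comm]
  · exact ((hf.comp measurable_snd).mul (measurable_const.indicator
      (hH.compl.preimage (measurable_snd.add measurable_fst)))).aemeasurable

theorem setIntegral_setIntegral_compl_sub {G : Type*} [MeasurableSpace G] [AddGroup G]
    [MeasurableAdd₂ G] [MeasurableNeg G] {μ : Measure G} [SFinite μ] [μ.IsAddRightInvariant]
    {H : Set G} (hH : MeasurableSet H) {F : G → ℝ} (hF_nonneg : 0 ≤ F) (hF_meas : Measurable F)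
    (hF : Integrable F μ) :
    ∫ y in H, ∫ x in Hᶜ, F (x - y) ∂μ ∂μ
      = (∫⁻ z, ENNReal.ofReal (F z) * μ {y ∈ H | z + y ∉ H} ∂μ).toReal := by
  have inner (y : G) :
      ∫ x in Hᶜ, F (x - y) ∂μ = (∫⁻ x in Hᶜ, ENNReal.ofReal (F (x - y)) ∂μ).toReal :=
    integral_eq_lintegral_of_nonneg_ae (.of_forall fun x => hF_nonneg (x - y))
      (hF_meas.comp (measurable_sub_const y)).aestronglyMeasurable
  have inner_lt_top (y : G) : ∫⁻ x in Hᶜ, ENNReal.ofReal (F (x - y)) ∂μ < ∞ :=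
    calc ∫⁻ x in Hᶜ, ENNReal.ofReal (F (x - y)) ∂μ
        ≤ ∫⁻ x, ENNReal.ofReal (F (x - y)) ∂μ := setLIntegral_le_lintegral _ _
      _ = ∫⁻ x, ENNReal.ofReal (F x) ∂μ :=
          lintegral_sub_right_eq_self (fun x => ENNReal.ofReal (F x)) y
      _ < ∞ := hF.lintegral_lt_top
  simp_rw [inner]
  rw [integral_toReal _ (.of_forall inner_lt_top),
    setLIntegral_setLIntegral_compl_sub hH (f := fun z => ENNReal.ofReal (F z))
      (ENNReal.measurable_ofReal.comp hF_meas)]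
  refine (Measurable.lintegral_prod_right' (ν := μ.restrict Hᶜ)
    (f := fun p : G × G => ENNReal.ofReal (F (p.2 - p.1))) ?_).aemeasurable
  exact ENNReal.measurable_ofReal.comp (hF_meas.comp (measurable_snd.sub measurable_fst))

theorem volume_regionBetween_sub_const {f : ℝ → ℝ} {s : Set ℝ} (hf : IntegrableOn f s)
    (hs : MeasurableSet s) (hs' : volume s ≠ ∞) {t : ℝ} (ht : 0 ≤ t) :
    volume (regionBetween (fun b => f b - t) f s) = ENNReal.ofReal (t * volume.real s) := by
  rw [Measure.volume_eq_prod, volume_regionBetween_eq_integral (f := fun b => f b - t)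
    (hf.sub (integrableOn_const hs')) hf hs (fun _ _ => by linarith)]
  simp [mul_comm]

def disk (R : ℝ) : Set (ℝ × ℝ) := {y | y.1 ^ 2 + y.2 ^ 2 < R ^ 2}

theorem measurableSet_disk (R : ℝ) : MeasurableSet (disk R) :=
  measurableSet_lt (by fun_prop) (by fun_prop)

theorem disk_subset_closedBall (R : ℝ) : disk R ⊆ Metric.closedBall 0 |R| := by
  intro x (hx : x.1 ^ 2 + x.2 ^ 2 < R ^ 2)
  rw [mem_closedBall_zero_iff, Prod.norm_def, max_le_iff, Real.norm_eq_abs, Real.norm_eq_abs]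
  exact ⟨sq_le_sq.1 (by nlinarith [sq_nonneg x.2]), sq_le_sq.1 (by nlinarith [sq_nonneg x.1])⟩

theorem volume_disk_lt_top (R : ℝ) : volume (disk R) < ∞ :=
  (Metric.isBounded_closedBall.subset (disk_subset_closedBall R)).measure_lt_top

noncomputable def orthoFrame (u : ℝ × ℝ) : ℝ × ℝ →ₗ[ℝ] ℝ × ℝ :=
  Matrix.toLin (Module.Basis.finTwoProd ℝ) (Module.Basis.finTwoProd ℝ) !![-u.2, u.1; u.1, u.2]

theorem orthoFrame_apply (u p : ℝ × ℝ) :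
    orthoFrame u p = (-u.2 * p.1 + u.1 * p.2, u.1 * p.1 + u.2 * p.2) :=
  Matrix.toLin_finTwoProd_apply _ _ _ _ p

theorem det_orthoFrame (u : ℝ × ℝ) : LinearMap.det (orthoFrame u) = -(u.1 ^ 2 + u.2 ^ 2) := by
  rw [orthoFrame, LinearMap.det_toLin, Matrix.det_fin_two_of]
  ring

theorem volume_image_orthoFrame {u : ℝ × ℝ} (hu : u.1 ^ 2 + u.2 ^ 2 = 1) (s : Set (ℝ × ℝ)) :
    volume (orthoFrame u '' s) = volume s := by
  rw [Measure.addHaar_image_linearMap, det_orthoFrame, hu]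
  simp

theorem orthoFrame_sq_add_sq {u : ℝ × ℝ} (hu : u.1 ^ 2 + u.2 ^ 2 = 1) (p : ℝ × ℝ) :
    (orthoFrame u p).1 ^ 2 + (orthoFrame u p).2 ^ 2 = p.1 ^ 2 + p.2 ^ 2 := by
  rw [orthoFrame_apply]
  linear_combination (p.1 ^ 2 + p.2 ^ 2) * hu

theorem smul_add_orthoFrame (u : ℝ × ℝ) (t b a : ℝ) :
    t • u + orthoFrame u (b, a) = orthoFrame u (b, a + t) := by
  ext <;> simp only [orthoFrame_apply, Prod.fst_add, Prod.snd_add, Prod.smul_fst,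
    Prod.smul_snd, smul_eq_mul] <;> ring

theorem ofReal_le_volume_disk_add_notMem {R t : ℝ} {d : ℝ × ℝ} (hd : d.1 ^ 2 + d.2 ^ 2 = t ^ 2)
    (ht : 0 ≤ t) (htR : t ≤ R) :
    ENNReal.ofReal (2 * (R - t) * t) ≤ volume {x ∈ disk R | d + x ∉ disk R} := by
  rcases ht.eq_or_lt with rfl | hpos
  · simp
  set u : ℝ × ℝ := t⁻¹ • d
  have hu : u.1 ^ 2 + u.2 ^ 2 = 1 := by
    simp only [u, Prod.smul_fst, Prod.smul_snd, smul_eq_mul]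
    field_simp
    linarith
  have hdu : d = t • u := by simp [u, smul_smul, mul_inv_cancel₀ hpos.ne']
  set c : ℝ → ℝ := fun b => √(R ^ 2 - b ^ 2)
  -- In coordinates `(b, a)` with `u` as second axis: the band of height `t` below the arc of
  -- `∂(disk R)` facing `d`, over `|b| < R - t` (where the arc is higher than `t`).
  have hsub : orthoFrame u '' regionBetween (fun b => c b - t) c (Ioo (t - R) (R - t))
      ⊆ {x ∈ disk R | d + x ∉ disk R} := by
    rintro _ ⟨⟨b, a⟩, ⟨⟨hb₁, hb₂⟩, ha₁, ha₂⟩, rfl⟩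
    have hc_sq : c b ^ 2 = R ^ 2 - b ^ 2 := Real.sq_sqrt (by nlinarith)
    have htc : t < c b := (Real.lt_sqrt hpos.le).2 (by nlinarith)
    simp only [disk, mem_ofPred_eq, hdu, smul_add_orthoFrame, orthoFrame_sq_add_sq hu, not_lt]
    constructor <;> nlinarith
  calc ENNReal.ofReal (2 * (R - t) * t)
      = volume (regionBetween (fun b => c b - t) c (Ioo (t - R) (R - t))) := by
        rw [volume_regionBetween_sub_const _ measurableSet_Ioo (by simp) hpos.le,
          Real.volume_real_Ioo_of_le (by linarith)]
        · ring_nf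
        · exact (Continuous.integrableOn_Icc (by fun_prop)).mono_set Ioo_subset_Icc_self
    _ = volume (orthoFrame u '' regionBetween (fun b => c b - t) c (Ioo (t - R) (R - t))) :=
        (volume_image_orthoFrame hu _).symm
    _ ≤ _ := measure_mono hsub

theorem two_mul_sub_mul_integral_le {R ρ : ℝ} (hρ : 0 ≤ ρ) (hρR : ρ ≤ R) {F : ℝ × ℝ → ℝ}
    (hF_nonneg : 0 ≤ F) (hF_meas : Measurable F) (hF : Integrable F)
    (hF_supp : Function.support F ⊆ disk ρ) :
    2 * (R - ρ) * ∫ z, √(z.1 ^ 2 + z.2 ^ 2) * F z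
      ≤ ∫ y in disk R, ∫ x in (disk R)ᶜ, F (x - y) := by
  rw [setIntegral_setIntegral_compl_sub (measurableSet_disk R) hF_nonneg hF_meas hF,
    ← integral_const_mul, integral_eq_lintegral_of_nonneg_ae]
  · have h_lt_top : ∫⁻ z, ENNReal.ofReal (F z) * volume {y ∈ disk R | z + y ∉ disk R} < ∞ :=
      calc ∫⁻ z, ENNReal.ofReal (F z) * volume {y ∈ disk R | z + y ∉ disk R}
          ≤ ∫⁻ z, ENNReal.ofReal (F z) * volume (disk R) :=
            lintegral_mono fun z => by gcongr; exact fun y hy => hy.1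
        _ = (∫⁻ z, ENNReal.ofReal (F z)) * volume (disk R) :=
            lintegral_mul_const' _ _ (volume_disk_lt_top R).ne
        _ < ∞ := ENNReal.mul_lt_top hF.lintegral_lt_top (volume_disk_lt_top R)
    refine ENNReal.toReal_mono h_lt_top.ne (lintegral_mono fun z => ?_)
    by_cases hz : F z = 0
    · simp [hz]
    set t := √(z.1 ^ 2 + z.2 ^ 2)
    have ht : 0 ≤ t := Real.sqrt_nonneg _
    have htρ : t < ρ := Real.sqrt_sq hρ ▸ Real.sqrt_lt_sqrt (by positivity) (hF_supp hz)
    calc ENNReal.ofReal (2 * (R - ρ) * (t * F z))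
        = ENNReal.ofReal (F z) * ENNReal.ofReal (2 * (R - ρ) * t) := by
          rw [← ENNReal.ofReal_mul (hF_nonneg z)]
          congr 1
          ring
      _ ≤ ENNReal.ofReal (F z) * ENNReal.ofReal (2 * (R - t) * t) := by gcongr
      _ ≤ _ := by
          gcongr
          exact ofReal_le_volume_disk_add_notMem (Real.sq_sqrt (by positivity)).symm ht
            (by linarith)
  · exact .of_forall fun z =>
      mul_nonneg (by linarith) (mul_nonneg (Real.sqrt_nonneg _) (hF_nonneg z))
  · fun_prop

noncomputable def uniformDiskDensity (ρ : ℝ) : ℝ × ℝ → ℝ :=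
  (disk ρ).indicator fun _ => 1 / (π * ρ ^ 2)

theorem uniformDiskDensity_nonneg (ρ : ℝ) : 0 ≤ uniformDiskDensity ρ :=
  indicator_nonneg fun _ _ => by positivity

theorem measurable_uniformDiskDensity (ρ : ℝ) : Measurable (uniformDiskDensity ρ) :=
  measurable_const.indicator (measurableSet_disk ρ)

theorem integrable_uniformDiskDensity (ρ : ℝ) : Integrable (uniformDiskDensity ρ) :=
  (integrable_indicator_iff (measurableSet_disk ρ)).2 (integrableOn_const (volume_disk_lt_top ρ).ne)

theorem integral_sqrt_mul_uniformDiskDensity_pos {ρ : ℝ} (hρ : 0 < ρ) :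
    0 < ∫ x : ℝ × ℝ, √(x.1 ^ 2 + x.2 ^ 2) * uniformDiskDensity ρ x := by
  have h_eq : (fun x : ℝ × ℝ => √(x.1 ^ 2 + x.2 ^ 2) * uniformDiskDensity ρ x)
      = (disk ρ).indicator fun x => √(x.1 ^ 2 + x.2 ^ 2) * (1 / (π * ρ ^ 2)) := by
    ext x
    exact (indicator_mul_right _ (fun x : ℝ × ℝ => √(x.1 ^ 2 + x.2 ^ 2)) _).symm
  rw [integral_pos_iff_support_of_nonneg
    (fun x => mul_nonneg (Real.sqrt_nonneg _) (uniformDiskDensity_nonneg ρ x)), h_eq]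
  · set U : Set (ℝ × ℝ) := {x | 0 < x.1 ^ 2 + x.2 ^ 2} ∩ disk ρ
    have hU : IsOpen U := (isOpen_lt (by fun_prop) (by fun_prop)).inter
      (isOpen_lt (by fun_prop) (by fun_prop))
    have hU_ne : U.Nonempty := ⟨(ρ / 2, 0), by
      simp only [U, disk, mem_inter_iff, mem_ofPred_eq]
      constructor <;> nlinarith⟩
    refine (hU.measure_pos volume hU_ne).trans_le (measure_mono fun x hx => ?_)
    rw [Function.mem_support, indicator_of_mem hx.2]
    exact mul_ne_zero (Real.sqrt_pos.2 hx.1).ne'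
      (one_div_ne_zero (mul_ne_zero pi_ne_zero (pow_ne_zero 2 hρ.ne')))
  · rw [h_eq, integrable_indicator_iff (measurableSet_disk ρ)]
    exact (ContinuousOn.integrableOn_compact (isCompact_closedBall 0 |ρ|) (by fun_prop)).mono_set
      (disk_subset_closedBall ρ)

theorem sub_div_pi_mul_le_escape_ratio {RH Rd : ℝ} (hRd : 0 < Rd) (hRdH : Rd ≤ RH) :
    (RH - Rd) / (π * RH)
      ≤ (∫ xp in disk RH, ∫ x in (disk RH)ᶜ, uniformDiskDensity Rd (x - xp)) /
        ((∫ x, √(x.1 ^ 2 + x.2 ^ 2) * uniformDiskDensity Rd x) * (2 * π * RH)) := by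
  have hμ := integral_sqrt_mul_uniformDiskDensity_pos hRd
  have hRH : 0 < RH := hRd.trans_le hRdH
  calc (RH - Rd) / (π * RH)
      = 2 * (RH - Rd) * (∫ x, √(x.1 ^ 2 + x.2 ^ 2) * uniformDiskDensity Rd x) /
        ((∫ x, √(x.1 ^ 2 + x.2 ^ 2) * uniformDiskDensity Rd x) * (2 * π * RH)) := by
        field_simp
    _ ≤ _ := by
        gcongr
        exact two_mul_sub_mul_integral_le hRd.le hRdH (uniformDiskDensity_nonneg Rd)
          (measurable_uniformDiskDensity Rd) (integrable_uniformDiskDensity Rd)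
          support_indicator_subset

/-- Sharpness of the symmetric bound `p ≤ μL/(πA)`: for every `ε > 0` there
are a disk habitat `H` of radius `R_H` (perimeter `L = 2πR_H`) and a
rotationally symmetric dispersal density `f_d` (uniform on a disk of radius
`R_d`, with mean dispersal distance `μ`) such that `pA/(μL) > 1/π − ε`, where
`pA = ∬_{x_p∈H} ∬_{x∈Hᶜ} f_d(x−x_p)`.  Hence the constant `1/π` is optimal. -/
theorem symmetric_bound_sharp (ε : ℝ) (hε : 0 < ε) :
    ∃ RH Rd : ℝ, 0 < Rd ∧ Rd < RH ∧
      (∫ xp in {y : ℝ × ℝ | y.1 ^ 2 + y.2 ^ 2 < RH ^ 2},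
          ∫ x in {y : ℝ × ℝ | y.1 ^ 2 + y.2 ^ 2 < RH ^ 2}ᶜ,
            ({y : ℝ × ℝ | y.1 ^ 2 + y.2 ^ 2 < Rd ^ 2}.indicator
              (fun _ => 1 / (Real.pi * Rd ^ 2)) (x - xp))) /
        ((∫ x : ℝ × ℝ, Real.sqrt (x.1 ^ 2 + x.2 ^ 2) *
            ({y : ℝ × ℝ | y.1 ^ 2 + y.2 ^ 2 < Rd ^ 2}.indicator
              (fun _ => 1 / (Real.pi * Rd ^ 2)) x)) *
          (2 * Real.pi * RH))
      > 1 / Real.pi - ε := by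
  set RH := 1 / (π * ε) + 2
  have hRH : 1 < RH := by
    have : 0 < 1 / (π * ε) := by positivity
    linarith
  refine ⟨RH, 1, one_pos, hRH, lt_of_lt_of_le ?_ (sub_div_pi_mul_le_escape_ratio one_pos hRH.le)⟩
  have h_small : 1 / (π * RH) < ε := by
    rw [div_lt_iff₀ (by positivity)]
    have : ε * (π * RH) = 1 + 2 * (π * ε) := by
      simp only [RH]
      field_simp
    linarith [mul_pos pi_pos hε]
  calc 1 / π - ε < 1 / π - 1 / (π * RH) := by linarith
    _ = (RH - 1) / (π * RH) := by field_simp
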